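/- Let A be a real symmetric positive semidefinite n×n matrix with orthonormal eigenbasis v₁, ..., vₙ and corresponding eigenvalues λ₁ > λ₂ ≥ ⋯ ≥ λₙ ≥ 0 with λ₂ > 0. Let x₀ ∈ ℝ^n be a unit vector with c := ⟨v₁, x₀⟩ ≠ 0 and |c| < 1, and let ε ∈ (0,1). If the natural number k satisfies k ≥ log((1 − c²)/(c² ε²)) / (2 log(λ₁/λ₂)), then 1 − ⟨v₁, A^k x₀⟩² / ‖A^k x₀‖² ≤ ε². -/

import Mathlib

/-!
In the eigenbasis, `⟪v i, A ^ k x₀⟫ = λᵢ ^ k ⟪v i, x₀⟫`. Since `|λᵢ| ≤ λ₂` for `i ≠ 1`, the squared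
norm of the part of `A ^ k x₀` orthogonal to `v₁` is at most `λ₂ ^ (2k) (1 - c²)`, while its
`v₁`-component squared is `λ₁ ^ (2k) c²`. The bound on `k` makes the ratio of the two at most `ε²`,
and the squared sine of an angle is at most its squared tangent.
-/

open Finset Matrix Real
open scoped RealInnerProductSpace

theorem Real.mul_pow_le_pow_of_log_div_le {q a b : ℝ} (hb : 0 < b) (hba : b < a) {m : ℕ}
    (h : log q / log (a / b) ≤ m) : q * b ^ m ≤ a ^ m := by
  have hab : 0 < a / b := div_pos (hb.trans hba) hb
  rw [div_le_iff₀ (log_pos ((one_lt_div hb).2 hba)), ← log_pow] at h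
  rw [← le_div_iff₀ (pow_pos hb m), ← div_pow]
  calc q ≤ exp (log q) := le_exp_log q
    _ ≤ exp (log ((a / b) ^ m)) := exp_le_exp.2 h
    _ = (a / b) ^ m := exp_log (pow_pos hab m)

theorem Orthonormal.exists_orthonormalBasis_coe_eq {𝕜 ι E : Type*} [RCLike 𝕜] [Fintype ι]
    [NormedAddCommGroup E] [InnerProductSpace 𝕜 E] [FiniteDimensional 𝕜 E] {v : ι → E}
    (hv : Orthonormal 𝕜 v) (card_eq : Module.finrank 𝕜 E = Fintype.card ι) :
    ∃ b : OrthonormalBasis ι 𝕜 E, ⇑b = v := by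
  obtain ⟨b, hb⟩ := (hv.comp _ Subtype.val_injective).exists_orthonormalBasis_extension_of_card_eq
    card_eq (s := Set.univ)
  exact ⟨b, funext fun i => hb i trivial⟩

theorem one_sub_inner_sq_div_norm_sq_le {E : Type*} [NormedAddCommGroup E]
    [InnerProductSpace ℝ E] {u y : E} (hu : ‖u‖ = 1) (h : ⟪u, y⟫ ≠ 0) :
    1 - ⟪u, y⟫ ^ 2 / ‖y‖ ^ 2 ≤ (‖y‖ ^ 2 - ⟪u, y⟫ ^ 2) / ⟪u, y⟫ ^ 2 := by
  have hle : ⟪u, y⟫ ^ 2 ≤ ‖y‖ ^ 2 := by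
    simpa only [sq_abs, hu, one_mul] using
      pow_le_pow_left₀ (abs_nonneg _) (abs_real_inner_le_norm u y) 2
  have hpos : 0 < ⟪u, y⟫ ^ 2 := by positivity
  rw [one_sub_div (hpos.trans_le hle).ne']
  exact div_le_div_of_nonneg_left (sub_nonneg.2 hle) hpos hle

theorem LinearMap.IsPositive.nonneg_of_apply_eq_smul {E : Type*} [NormedAddCommGroup E]
    [InnerProductSpace ℝ E] {T : E →ₗ[ℝ] E} (hT : T.IsPositive) {x : E} (hx : x ≠ 0) {μ : ℝ}
    (h : T x = μ • x) : 0 ≤ μ := by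
  have := hT.inner_nonneg_left x
  rw [h, real_inner_smul_left, real_inner_self_eq_norm_sq] at this
  exact nonneg_of_mul_nonneg_left this (by positivity)

theorem Matrix.toEuclideanLin_pow {n : Type*} [Fintype n] [DecidableEq n] (A : Matrix n n ℝ)
    (k : ℕ) : (A ^ k).toEuclideanLin = A.toEuclideanLin ^ k := by
  simp [← coe_toEuclideanCLM_eq_toEuclideanLin]

namespace OrthonormalBasis

variable {ι E : Type*} [Fintype ι] [NormedAddCommGroup E] [InnerProductSpace ℝ E]
  (b : OrthonormalBasis ι ℝ E) {T : E →ₗ[ℝ] E} {μ : ι → ℝ}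

theorem inner_apply_of_apply_eq_smul (hT : ∀ i, T (b i) = μ i • b i) (i : ι) (x : E) :
    ⟪b i, T x⟫ = μ i * ⟪b i, x⟫ := by
  conv_lhs => rw [← b.sum_repr' x]
  simp [map_sum, hT, smul_smul, b.orthonormal.inner_right_fintype, mul_comm]

theorem inner_pow_apply_of_apply_eq_smul (hT : ∀ i, T (b i) = μ i • b i) (k : ℕ) (i : ι)
    (x : E) : ⟪b i, (T ^ k) x⟫ = μ i ^ k * ⟪b i, x⟫ := by
  induction k with
  | zero => simp
  | succ k ih =>
    rw [pow_succ', Module.End.mul_apply, b.inner_apply_of_apply_eq_smul hT, ih, pow_succ',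
      mul_assoc]

theorem norm_sq_sub_inner_sq [DecidableEq ι] (i₀ : ι) (x : E) :
    ‖x‖ ^ 2 - ⟪b i₀, x⟫ ^ 2 = ∑ i ∈ univ.erase i₀, ⟪b i, x⟫ ^ 2 := by
  rw [← b.sum_sq_inner_right, ← add_sum_erase _ _ (mem_univ i₀), add_sub_cancel_left]

theorem norm_sq_pow_apply_sub_inner_sq_le (hT : ∀ i, T (b i) = μ i • b i) {i₀ : ι} {r : ℝ}
    (hr : ∀ i ≠ i₀, |μ i| ≤ r) (k : ℕ) (x : E) :
    ‖(T ^ k) x‖ ^ 2 - ⟪b i₀, (T ^ k) x⟫ ^ 2 ≤ r ^ (2 * k) * (‖x‖ ^ 2 - ⟪b i₀, x⟫ ^ 2) := by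
  classical
  rw [b.norm_sq_sub_inner_sq, b.norm_sq_sub_inner_sq, mul_sum]
  refine sum_le_sum fun i hi => ?_
  have hμ : μ i ^ 2 ≤ r ^ 2 := by
    simpa only [sq_abs] using pow_le_pow_left₀ (abs_nonneg _) (hr i (ne_of_mem_erase hi)) 2
  calc ⟪b i, (T ^ k) x⟫ ^ 2 = (μ i ^ 2) ^ k * ⟪b i, x⟫ ^ 2 := by
        rw [b.inner_pow_apply_of_apply_eq_smul hT]; ring
    _ ≤ (r ^ 2) ^ k * ⟪b i, x⟫ ^ 2 := by gcongr
    _ = r ^ (2 * k) * ⟪b i, x⟫ ^ 2 := by rw [pow_mul]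

end OrthonormalBasis

theorem power_method_iterations_general
    (n : ℕ) [NeZero n]
    (A : Matrix (Fin n) (Fin n) ℝ) (hA : A.PosSemidef)
    (v : Fin n → EuclideanSpace ℝ (Fin n)) (hv : Orthonormal ℝ v)
    (lam : Fin n → ℝ)
    (heig : ∀ i, Matrix.toEuclideanLin A (v i) = lam i • v i)
    (hdec : ∀ i j : Fin n, i ≤ j → lam j ≤ lam i)
    (hgap : lam 1 < lam 0)
    (hpos : 0 < lam 1)
    (x₀ : EuclideanSpace ℝ (Fin n)) (hx₀ : ‖x₀‖ = 1)
    (c : ℝ) (hc : c = (inner ℝ (v 0) x₀ : ℝ)) (hc0 : c ≠ 0)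
    (ε : ℝ) (hε : ε ∈ Set.Ioo (0 : ℝ) 1)
    (k : ℕ)
    (hk : (k : ℝ) ≥ Real.log ((1 - c ^ 2) / (c ^ 2 * ε ^ 2))
        / (2 * Real.log (lam 0 / lam 1))) :
    1 - (inner ℝ (v 0) (Matrix.toEuclideanLin (A ^ k) x₀) : ℝ) ^ 2
        / ‖Matrix.toEuclideanLin (A ^ k) x₀‖ ^ 2 ≤ ε ^ 2 := by
  obtain ⟨hε0, -⟩ := hε
  obtain ⟨b, rfl⟩ := hv.exists_orthonormalBasis_coe_eq (by simp)
  have hnonneg : ∀ i, 0 ≤ lam i := fun i =>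
    (isPositive_toEuclideanLin_iff.2 hA).nonneg_of_apply_eq_smul (b.orthonormal.ne_zero i) (heig i)
  have hlam : ∀ i ≠ 0, |lam i| ≤ lam 1 := fun i hi =>
    abs_le.2 ⟨by linarith [hnonneg i], hdec _ _ (Fin.one_le_of_ne_zero hi)⟩
  have htail := b.norm_sq_pow_apply_sub_inner_sq_le heig hlam k x₀
  rw [hx₀, ← hc, one_pow] at htail
  rw [toEuclideanLin_pow]
  set y := (A.toEuclideanLin ^ k) x₀
  have hy0 : ⟪b 0, y⟫ = lam 0 ^ k * c := by rw [b.inner_pow_apply_of_apply_eq_smul heig, hc]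
  have hratio : (1 - c ^ 2) * lam 1 ^ (2 * k) ≤ ε ^ 2 * ⟪b 0, y⟫ ^ 2 := by
    have := mul_pow_le_pow_of_log_div_le hpos hgap (m := 2 * k) (by
      rw [div_mul_eq_div_div_swap, ge_iff_le, div_le_iff₀ two_pos] at hk
      push_cast
      rwa [mul_comm])
    rw [div_mul_eq_mul_div, div_le_iff₀ (by positivity)] at this
    rw [hy0]
    linear_combination this
  have hy0_ne : ⟪b 0, y⟫ ≠ 0 := by
    rw [hy0]
    have := hpos.trans hgap
    positivity
  calc 1 - ⟪b 0, y⟫ ^ 2 / ‖y‖ ^ 2 ≤ (‖y‖ ^ 2 - ⟪b 0, y⟫ ^ 2) / ⟪b 0, y⟫ ^ 2 :=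
        one_sub_inner_sq_div_norm_sq_le (b.orthonormal.1 0) hy0_ne
    _ ≤ ε ^ 2 := by rw [div_le_iff₀ (by positivity)]; linarith

/-- iteration count for the power method. -/
theorem power_method_iterations
    (n : ℕ) [NeZero n] (hn : 2 ≤ n)
    (A : Matrix (Fin n) (Fin n) ℝ) (hA : A.PosSemidef)
    (v : Fin n → EuclideanSpace ℝ (Fin n)) (hv : Orthonormal ℝ v)
    (lam : Fin n → ℝ)
    (heig : ∀ i, Matrix.toEuclideanLin A (v i) = lam i • v i)
    (hdec : ∀ i j : Fin n, i ≤ j → lam j ≤ lam i)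
    (hgap : lam 1 < lam 0)
    (hpos : 0 < lam 1)
    (x₀ : EuclideanSpace ℝ (Fin n)) (hx₀ : ‖x₀‖ = 1)
    (c : ℝ) (hc : c = (inner ℝ (v 0) x₀ : ℝ)) (hc0 : c ≠ 0) (hc1 : |c| < 1)
    (ε : ℝ) (hε : ε ∈ Set.Ioo (0 : ℝ) 1)
    (k : ℕ)
    (hk : (k : ℝ) ≥ Real.log ((1 - c ^ 2) / (c ^ 2 * ε ^ 2))
        / (2 * Real.log (lam 0 / lam 1))) :
    1 - (inner ℝ (v 0) (Matrix.toEuclideanLin (A ^ k) x₀) : ℝ) ^ 2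
        / ‖Matrix.toEuclideanLin (A ^ k) x₀‖ ^ 2 ≤ ε ^ 2 :=
  power_method_iterations_general n A hA v hv lam heig hdec hgap hpos x₀ hx₀ c hc hc0 ε hε k hk
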